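/- arXiv:1907.07908 — 2 statements merged into one kernel-verified Lean document; each statement's English description precedes it below -/
import Mathlib

section
/- Let A be the adjacency matrix of a finite simple connected undirected graph on n vertices with eigenvalues λ_1 > λ_2 ≥ ⋯ ≥ λ_n and orthonormal eigenvectors ψ_1,…,ψ_n, where ψ_1 is the Perron eigenvector with positive entries. Define R̃_i(ζ) = R_i(ζ)/(e^{ζλ_1}(ψ_1ᵀ1)) where R_i(ζ) = (e^{ζA}·1)_i. Then lim_{ζ→∞} R̃_i(ζ) = ψ_{1,i} for every node i; i.e., the ranking induced by R_i(ζ) converges to the eigenvector-centrality ranking as ζ → ∞. -/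
/-!
Expand `e^{ζA} v` in an orthonormal eigenbasis `b_k` of the symmetric matrix `A`:
`e^{-ζλ₁} e^{ζA} v = ∑ₖ e^{ζ(λₖ - λ₁)} (b_k ⬝ v) b_k`. A mode with `λₖ < λ₁` decays and is
orthogonal to `ψ`; a mode with `λₖ = λ₁` is constant and, by simplicity, a multiple of `ψ`. So
every mode tends to `(b_k ⬝ ψ)² (ψ ⬝ v) ψ`, and by Parseval the sum tends to `(ψ ⬝ v) ψ`.
For `v = 1` the `i`-th entry of the limit is `(∑ⱼ ψⱼ) ψᵢ`, with `∑ⱼ ψⱼ > 0`.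
-/

open Filter Topology NormedSpace Matrix

section
variable {m : Type*} [Fintype m] [DecidableEq m]

theorem Matrix.pow_mulVec_of_mulVec_eq_smul {R : Type*} [CommSemiring R] {M : Matrix m m R}
    {μ : R} {v : m → R} (hv : M *ᵥ v = μ • v) (k : ℕ) : (M ^ k) *ᵥ v = μ ^ k • v := by
  induction k with
  | zero => simp
  | succ k ih => rw [pow_succ', ← mulVec_mulVec, ih, mulVec_smul, hv, smul_smul, ← pow_succ]

open scoped Matrix.Norms.Operator in
theorem Matrix.exp_mulVec_of_mulVec_eq_smul {𝕂 : Type*} [RCLike 𝕂] {M : Matrix m m 𝕂}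
    {μ : 𝕂} {v : m → 𝕂} (hv : M *ᵥ v = μ • v) : exp M *ᵥ v = exp μ • v := by
  have hM : HasSum (fun k => ((k.factorial⁻¹ : 𝕂) • M ^ k) *ᵥ v) (exp M *ᵥ v) :=
    (exp_series_hasSum_exp' M).map (mulVec.addMonoidHomLeft v)
      (continuous_id.matrix_mulVec continuous_const)
  refine hM.unique ((exp_series_hasSum_exp' (𝕂 := 𝕂) μ).smul_const v |>.congr_fun fun k => ?_)
  rw [smul_mulVec, pow_mulVec_of_mulVec_eq_smul hv, smul_smul, smul_eq_mul]

end

section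
variable {ι n : Type*} [Fintype ι] [Fintype n]

theorem OrthonormalBasis.sum_dotProduct_smul (b : OrthonormalBasis ι ℝ (EuclideanSpace ℝ n))
    (v : n → ℝ) : ∑ k, (⇑(b k) ⬝ᵥ v) • ⇑(b k) = v := by
  simpa [EuclideanSpace.inner_eq_star_dotProduct, dotProduct_comm] using
    congrArg WithLp.ofLp (b.sum_repr' (WithLp.toLp 2 v))

theorem OrthonormalBasis.sum_dotProduct_mul_dotProduct
    (b : OrthonormalBasis ι ℝ (EuclideanSpace ℝ n)) (v w : n → ℝ) :
    ∑ k, (⇑(b k) ⬝ᵥ v) * (⇑(b k) ⬝ᵥ w) = v ⬝ᵥ w := by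
  simpa [EuclideanSpace.inner_eq_star_dotProduct, dotProduct_comm] using
    b.sum_inner_mul_inner (WithLp.toLp 2 v) (WithLp.toLp 2 w)

end

section
variable {n : Type*} [Fintype n] {A : Matrix n n ℝ}

theorem Matrix.IsHermitian.dotProduct_eq_zero_of_mulVec_eq_smul (hA : A.IsHermitian)
    {μ ν : ℝ} {v w : n → ℝ} (hv : A *ᵥ v = μ • v) (hw : A *ᵥ w = ν • w) (hμν : μ ≠ ν) :
    v ⬝ᵥ w = 0 := by
  have hsymm : (A *ᵥ v) ⬝ᵥ w = v ⬝ᵥ (A *ᵥ w) := by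
    rw [dotProduct_mulVec, ← mulVec_transpose, (isHermitian_iff_isSymm.mp hA).eq]
  rw [hv, hw, smul_dotProduct, dotProduct_smul, smul_eq_mul, smul_eq_mul] at hsymm
  exact (mul_eq_mul_right_iff.mp hsymm).resolve_left hμν

variable [DecidableEq n]

theorem Matrix.IsHermitian.exp_smul_mulVec_eq_sum (hA : A.IsHermitian) (ζ : ℝ) (v : n → ℝ) :
    NormedSpace.exp (ζ • A) *ᵥ v = ∑ k, (Real.exp (ζ * hA.eigenvalues k) *
      (⇑(hA.eigenvectorBasis k) ⬝ᵥ v)) • ⇑(hA.eigenvectorBasis k) := by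
  conv_lhs => rw [← hA.eigenvectorBasis.sum_dotProduct_smul v]
  simp only [mulVec_sum, mulVec_smul]
  refine Finset.sum_congr rfl fun k _ => ?_
  have hk : (ζ • A) *ᵥ ⇑(hA.eigenvectorBasis k) =
      (ζ * hA.eigenvalues k) • ⇑(hA.eigenvectorBasis k) := by
    rw [smul_mulVec, hA.mulVec_eigenvectorBasis, smul_smul]
  rw [exp_mulVec_of_mulVec_eq_smul hk, ← Real.exp_eq_exp_ℝ, smul_smul, mul_comm]

theorem Matrix.IsHermitian.tendsto_exp_smul_mulVec_of_simple_top (hA : A.IsHermitian)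
    {lam₁ : ℝ} {ψ : n → ℝ} (heig : A *ᵥ ψ = lam₁ • ψ) (hnorm : ψ ⬝ᵥ ψ = 1)
    (hmax : ∀ (μ : ℝ) (v : n → ℝ), v ≠ 0 → A *ᵥ v = μ • v → μ ≤ lam₁)
    (hsimple : ∀ v : n → ℝ, A *ᵥ v = lam₁ • v → ∃ c : ℝ, v = c • ψ) (v : n → ℝ) :
    Tendsto (fun ζ : ℝ => (Real.exp (ζ * lam₁))⁻¹ • (NormedSpace.exp (ζ • A) *ᵥ v)) atTop
      (𝓝 ((ψ ⬝ᵥ v) • ψ)) := by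
  set b := hA.eigenvectorBasis
  set eig := hA.eigenvalues
  have hterm : ∀ k,
      Tendsto (fun ζ : ℝ => (Real.exp (ζ * (eig k - lam₁)) * (⇑(b k) ⬝ᵥ v)) • ⇑(b k)) atTop
        (𝓝 ((⇑(b k) ⬝ᵥ ψ) ^ 2 • (ψ ⬝ᵥ v) • ψ)) := by
    intro k
    have hk : A *ᵥ ⇑(b k) = eig k • ⇑(b k) := hA.mulVec_eigenvectorBasis k
    have hbk : ⇑(b k) ≠ 0 := fun h => b.orthonormal.ne_zero k (by ext j; exact congrFun h j)
    rcases (hmax _ _ hbk hk).lt_or_eq with hlt | heq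
    · have hdecay : Tendsto (fun ζ : ℝ => Real.exp (ζ * (eig k - lam₁))) atTop (𝓝 0) :=
        Real.tendsto_exp_atBot.comp (tendsto_id.atTop_mul_const_of_neg (sub_neg.mpr hlt))
      rw [hA.dotProduct_eq_zero_of_mulVec_eq_smul hk heig hlt.ne]
      simpa using (hdecay.mul_const (⇑(b k) ⬝ᵥ v)).smul_const ⇑(b k)
    · obtain ⟨c, hc⟩ := hsimple _ (heq ▸ hk)
      simp only [heq, sub_self, mul_zero, Real.exp_zero, one_mul, hc, smul_dotProduct, hnorm,
        smul_smul, smul_eq_mul]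
      exact tendsto_const_nhds.congr fun _ => by ring_nf
  have hlim := tendsto_finsetSum Finset.univ fun k _ => hterm k
  simp only [← Finset.sum_smul, sq] at hlim
  rw [b.sum_dotProduct_mul_dotProduct, hnorm, one_smul] at hlim
  refine hlim.congr fun ζ => ?_
  rw [hA.exp_smul_mulVec_eq_sum, Finset.smul_sum]
  refine Finset.sum_congr rfl fun k _ => ?_
  rw [smul_smul, mul_sub, Real.exp_sub, div_eq_inv_mul, mul_assoc]
end

theorem riskCentrality_tendsto_eigenvector_general {n : ℕ} (G : SimpleGraph (Fin n))
    [DecidableRel G.Adj] (lam1 : ℝ) (ψ1 : Fin n → ℝ)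
    (heig : (G.adjMatrix ℝ).mulVec ψ1 = lam1 • ψ1)
    (hpos : ∀ j, 0 < ψ1 j)
    (hnorm : ∑ j, (ψ1 j) ^ 2 = 1)
    (hmax : ∀ (μ : ℝ) (v : Fin n → ℝ), v ≠ 0 →
      (G.adjMatrix ℝ).mulVec v = μ • v → μ ≤ lam1)
    (hsimple : ∀ v : Fin n → ℝ, (G.adjMatrix ℝ).mulVec v = lam1 • v → ∃ c : ℝ, v = c • ψ1)
    (i : Fin n) :
    Tendsto (fun ζ : ℝ =>
        ((exp (ζ • (G.adjMatrix ℝ))).mulVec (fun _ => 1)) i /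
          (Real.exp (ζ * lam1) * ∑ j, ψ1 j))
      atTop (𝓝 (ψ1 i)) := by
  have hsum : 0 < ∑ j, ψ1 j := Finset.sum_pos (fun j _ => hpos j) ⟨i, Finset.mem_univ i⟩
  have hlim := (G.isHermitian_adjMatrix ℝ).tendsto_exp_smul_mulVec_of_simple_top heig
    (by simpa [dotProduct, sq] using hnorm) hmax hsimple (fun _ => 1)
  have hlim_i := ((continuous_apply i).tendsto _).comp hlim |>.div_const (∑ j, ψ1 j)
  have hψ1_one : ψ1 ⬝ᵥ (fun _ => 1) = ∑ j, ψ1 j := by simp [dotProduct]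
  rw [Function.comp_def, Pi.smul_apply, hψ1_one, smul_eq_mul,
    mul_div_cancel_left₀ _ hsum.ne'] at hlim_i
  refine hlim_i.congr fun ζ => ?_
  simp only [Pi.smul_apply, smul_eq_mul]
  rw [inv_mul_eq_div, div_div]

/-- the normalized total communicability
`R̃_i(ζ) = R_i(ζ)/(e^{ζλ₁}(ψ₁ᵀ1))` tends to the Perron eigenvector entry `ψ₁ᵢ` as `ζ → ∞`. -/
theorem riskCentrality_tendsto_eigenvector {n : ℕ} (G : SimpleGraph (Fin n))
    [DecidableRel G.Adj] (hconn : G.Connected) (lam1 : ℝ) (ψ1 : Fin n → ℝ)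
    (heig : (G.adjMatrix ℝ).mulVec ψ1 = lam1 • ψ1)
    (hpos : ∀ j, 0 < ψ1 j)
    (hnorm : ∑ j, (ψ1 j) ^ 2 = 1)
    (hmax : ∀ (μ : ℝ) (v : Fin n → ℝ), v ≠ 0 →
      (G.adjMatrix ℝ).mulVec v = μ • v → μ ≤ lam1)
    (hsimple : ∀ v : Fin n → ℝ, (G.adjMatrix ℝ).mulVec v = lam1 • v → ∃ c : ℝ, v = c • ψ1)
    (i : Fin n) :
    Tendsto (fun ζ : ℝ =>
        ((exp (ζ • (G.adjMatrix ℝ))).mulVec (fun _ => 1)) i /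
          (Real.exp (ζ * lam1) * ∑ j, ψ1 j))
      atTop (𝓝 (ψ1 i)) :=
  riskCentrality_tendsto_eigenvector_general G lam1 ψ1 heig hpos hnorm hmax hsimple i
end

section
/- Let A be the adjacency matrix of a finite simple connected undirected graph, and let i, j be two nodes whose eigenvector centralities differ: ψ_{1,i} ≠ ψ_{1,j}. Then the set of interlacing points {ζ > 0 : C_i(ζ) = C_j(ζ)} where C_i(ζ) = (e^{ζA})_{ii}, is finite (possibly empty). -/
/-!
Diagonalising `A`, `C_i(ζ) - C_j(ζ) = ∑ₖ (ψₖ,ᵢ² - ψₖ,ⱼ²) e^{ζ λₖ}` is an exponential polynomial.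
Grouped by distinct exponents, its coefficient at `λ₁` is a positive multiple of
`ψ₁,ᵢ² - ψ₁,ⱼ² ≠ 0`, because every `λ₁`-eigenvector is a multiple of `ψ₁`. Hence the largest
exponent carrying a nonzero coefficient dominates, and there are no zeros for large `ζ`. On the
remaining compact interval the function, being real-analytic and not identically zero, has only
finitely many zeros.
-/

open NormedSpace Filter Topology Finset
open scoped Matrix

theorem tendsto_sum_mul_exp_mul_sub_max {s : Finset ℝ} (d : ℝ → ℝ) {a : ℝ} (ha : a ∈ s)
    (hmax : ∀ b ∈ s, b ≤ a) :
    Tendsto (fun ζ => ∑ b ∈ s, d b * Real.exp (ζ * (b - a))) atTop (𝓝 (d a)) := by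
  have hda : d a = ∑ b ∈ s, if a = b then d b else 0 := by rw [Finset.sum_ite_eq, if_pos ha]
  rw [hda]
  refine tendsto_finsetSum s fun b hb => ?_
  by_cases hba : b = a
  · simp [hba]
  · have hneg : b - a < 0 := sub_neg.mpr ((hmax b hb).lt_of_ne hba)
    have hexp : Tendsto (fun ζ : ℝ => Real.exp (ζ * (b - a))) atTop (𝓝 0) :=
      Real.tendsto_exp_atBot.comp (tendsto_id.atTop_mul_const_of_neg hneg)
    simpa [if_neg (Ne.symm hba)] using hexp.const_mul (d b)

theorem eventually_sum_mul_exp_ne_zero {s : Finset ℝ} {d : ℝ → ℝ} (h : ∃ b ∈ s, d b ≠ 0) :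
    ∀ᶠ ζ in atTop, ∑ b ∈ s, d b * Real.exp (ζ * b) ≠ 0 := by
  set t := s.filter (d · ≠ 0)
  have ht : t.Nonempty := by simpa [t, Finset.Nonempty] using h
  set a := t.max' ht
  have hlim := tendsto_sum_mul_exp_mul_sub_max d (t.max'_mem ht) (t.le_max' · ·)
  filter_upwards [hlim.eventually_ne (Finset.mem_filter.mp (t.max'_mem ht)).2] with ζ hζ
  have hsum : ∑ b ∈ s, d b * Real.exp (ζ * b) =
      Real.exp (ζ * a) * ∑ b ∈ t, d b * Real.exp (ζ * (b - a)) := by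
    rw [Finset.mul_sum, ← Finset.sum_filter_of_ne fun b _ hb => left_ne_zero_of_mul hb]
    refine Finset.sum_congr rfl fun b _ => ?_
    rw [mul_left_comm, ← Real.exp_add]
    ring_nf
  rw [hsum]
  exact mul_ne_zero (Real.exp_ne_zero _) hζ

theorem eventually_sum_mul_exp_ne_zero_of_sum_fiber_ne_zero {ι : Type*} [Fintype ι]
    (c μ : ι → ℝ) {r : ℝ} (h : ∑ k with μ k = r, c k ≠ 0) :
    ∀ᶠ ζ in atTop, ∑ k, c k * Real.exp (ζ * μ k) ≠ 0 := by
  have hfib : ∀ ζ, ∑ k, c k * Real.exp (ζ * μ k) =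
      ∑ b ∈ univ.image μ, (∑ k with μ k = b, c k) * Real.exp (ζ * b) := by
    intro ζ
    rw [← Finset.sum_fiberwise_of_maps_to (fun k _ => Finset.mem_image_of_mem μ (Finset.mem_univ k))]
    refine Finset.sum_congr rfl fun b _ => ?_
    rw [Finset.sum_mul]
    exact Finset.sum_congr rfl fun k hk => by rw [(Finset.mem_filter.mp hk).2]
  simp only [hfib]
  refine eventually_sum_mul_exp_ne_zero ⟨r, ?_, h⟩
  by_contra hr
  refine h (Finset.sum_eq_zero fun k hk => absurd ?_ hr)
  exact (Finset.mem_filter.mp hk).2 ▸ Finset.mem_image_of_mem μ (Finset.mem_univ k)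

theorem AnalyticOnNhd.finite_setOf_le_and_eq_zero {E : Type*} [NormedAddCommGroup E]
    [NormedSpace ℝ E] {f : ℝ → E} (hf : AnalyticOnNhd ℝ f Set.univ)
    (hev : ∀ᶠ x in atTop, f x ≠ 0) (a : ℝ) : {x | a ≤ x ∧ f x = 0}.Finite := by
  obtain ⟨M, hM⟩ := eventually_atTop.mp hev
  rcases hf.eqOn_zero_or_eventually_ne_zero_of_preconnected isPreconnected_univ with hzero | hcod
  · exact absurd (hzero (Set.mem_univ M)) (hM M le_rfl)
  refine (isCompact_Icc.finite_sdiff_of_mem_codiscreteWithin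
    (codiscreteWithin_mono (Set.subset_univ (Set.Icc a M)) hcod)).subset ?_
  rintro x ⟨hax, hfx⟩
  exact ⟨⟨hax, le_of_not_ge fun hMx => hM x hMx hfx⟩, fun hne => hne hfx⟩

theorem Matrix.IsHermitian.exp_smul_apply_self {m : Type*} [Fintype m] [DecidableEq m]
    {A : Matrix m m ℝ} (hA : A.IsHermitian) (ζ : ℝ) (i : m) :
    NormedSpace.exp (ζ • A) i i =
      ∑ k, Real.exp (ζ * hA.eigenvalues k) * hA.eigenvectorBasis k i ^ 2 := by
  set U := Unitary.toUnits hA.eigenvectorUnitary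
  have hconj : ζ • A = (U : Matrix m m ℝ) * Matrix.diagonal (ζ • hA.eigenvalues) *
      (↑U⁻¹ : Matrix m m ℝ) := by
    conv_lhs => rw [hA.spectral_theorem]
    simp [Unitary.conjStarAlgAut_apply, U, Matrix.diagonal_smul]
  rw [hconj, Matrix.exp_units_conj, Matrix.exp_diagonal, Matrix.mul_apply]
  simp [U, ← Real.exp_eq_exp_ℝ, sq]
  exact Finset.sum_congr rfl fun k _ => by ring

theorem Matrix.IsHermitian.exists_eigenvalues_eq {m : Type*} [Fintype m] [DecidableEq m]
    {A : Matrix m m ℝ} (hA : A.IsHermitian) {r : ℝ} {v : m → ℝ} (hv : v ≠ 0)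
    (hAv : A *ᵥ v = r • v) : ∃ k, hA.eigenvalues k = r := by
  have hr : Module.End.HasEigenvalue (Matrix.toLin' A) r :=
    Module.End.hasEigenvalue_of_hasEigenvector
      ⟨Module.End.mem_eigenspace_iff.mpr (by simpa using hAv), hv⟩
  simpa [Matrix.spectrum_toLin', hA.spectrum_real_eq_range_eigenvalues] using hr.mem_spectrum

theorem Matrix.IsHermitian.sum_eigenvectorBasis_sq_sub_sq_ne_zero {m : Type*} [Fintype m]
    [DecidableEq m] {A : Matrix m m ℝ} (hA : A.IsHermitian) {r : ℝ} {ψ : m → ℝ} (hψ : ψ ≠ 0)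
    (hAψ : A *ᵥ ψ = r • ψ) (hsimple : ∀ v, A *ᵥ v = r • v → ∃ c : ℝ, v = c • ψ) {i j : m}
    (hij : ψ i ^ 2 ≠ ψ j ^ 2) :
    ∑ k with hA.eigenvalues k = r, (hA.eigenvectorBasis k i ^ 2 - hA.eigenvectorBasis k j ^ 2)
      ≠ 0 := by
  set D := ψ i ^ 2 - ψ j ^ 2
  have hD : D ≠ 0 := sub_ne_zero.mpr hij
  have hquot : ∀ k, hA.eigenvalues k = r →
      0 < (hA.eigenvectorBasis k i ^ 2 - hA.eigenvectorBasis k j ^ 2) / D := by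
    intro k hk
    obtain ⟨a, ha⟩ := hsimple _ (hk ▸ hA.mulVec_eigenvectorBasis k)
    have ha0 : a ≠ 0 := by
      rintro rfl
      exact hA.eigenvectorBasis.orthonormal.ne_zero k (by ext l; simpa using congrFun ha l)
    simp only [ha, Pi.smul_apply, smul_eq_mul, mul_pow, ← mul_sub]
    rw [mul_div_cancel_right₀ _ hD]
    positivity
  obtain ⟨k₀, hk₀⟩ := hA.exists_eigenvalues_eq hψ hAψ
  rw [← mul_div_cancel₀ (∑ k with hA.eigenvalues k = r, _) hD, Finset.sum_div]
  refine mul_ne_zero hD (Finset.sum_pos (fun k hk => hquot k (Finset.mem_filter.mp hk).2)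
    ⟨k₀, by simp [hk₀]⟩).ne'

theorem interlacing_points_finite_general {n : ℕ} (G : SimpleGraph (Fin n))
    [DecidableRel G.Adj] (lam1 : ℝ) (ψ1 : Fin n → ℝ)
    (heig : (G.adjMatrix ℝ).mulVec ψ1 = lam1 • ψ1)
    (hpos : ∀ j, 0 < ψ1 j)
    (hsimple : ∀ v : Fin n → ℝ, (G.adjMatrix ℝ).mulVec v = lam1 • v → ∃ c : ℝ, v = c • ψ1)
    (i j : Fin n) (hne : ψ1 i ≠ ψ1 j) :
    {ζ : ℝ | 0 < ζ ∧
        (exp (ζ • (G.adjMatrix ℝ))) i i = (exp (ζ • (G.adjMatrix ℝ))) j j}.Finite := by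
  have hA := G.isHermitian_adjMatrix ℝ
  have hψ1 : ψ1 ≠ 0 := fun h => (hpos i).ne' (congrFun h i)
  have hsq : ψ1 i ^ 2 ≠ ψ1 j ^ 2 := fun h => hne ((sq_eq_sq₀ (hpos i).le (hpos j).le).mp h)
  set c : Fin n → ℝ := fun k => hA.eigenvectorBasis k i ^ 2 - hA.eigenvectorBasis k j ^ 2
  have hF : AnalyticOnNhd ℝ (fun ζ => ∑ k, c k * Real.exp (ζ * hA.eigenvalues k)) Set.univ := by
    intro x _
    fun_prop
  refine (hF.finite_setOf_le_and_eq_zero (eventually_sum_mul_exp_ne_zero_of_sum_fiber_ne_zero c _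
    (hA.sum_eigenvectorBasis_sq_sub_sq_ne_zero hψ1 heig hsimple hsq)) 0).subset ?_
  rintro ζ ⟨hζ, hCij⟩
  refine ⟨hζ.le, ?_⟩
  rw [hA.exp_smul_apply_self, hA.exp_smul_apply_self, ← sub_eq_zero,
    ← Finset.sum_sub_distrib] at hCij
  simpa [c, mul_sub, mul_comm] using hCij

/-- if two nodes have different eigenvector centralities, the set of
interlacing points `{ζ > 0 : C_i(ζ) = C_j(ζ)}` of their circulabilities is finite. -/
theorem interlacing_points_finite {n : ℕ} (G : SimpleGraph (Fin n))
    [DecidableRel G.Adj] (hconn : G.Connected) (lam1 : ℝ) (ψ1 : Fin n → ℝ)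
    (heig : (G.adjMatrix ℝ).mulVec ψ1 = lam1 • ψ1)
    (hpos : ∀ j, 0 < ψ1 j)
    (hnorm : ∑ j, (ψ1 j) ^ 2 = 1)
    (hmax : ∀ (μ : ℝ) (v : Fin n → ℝ), v ≠ 0 →
      (G.adjMatrix ℝ).mulVec v = μ • v → μ ≤ lam1)
    (hsimple : ∀ v : Fin n → ℝ, (G.adjMatrix ℝ).mulVec v = lam1 • v → ∃ c : ℝ, v = c • ψ1)
    (i j : Fin n) (hne : ψ1 i ≠ ψ1 j) :
    {ζ : ℝ | 0 < ζ ∧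
        (exp (ζ • (G.adjMatrix ℝ))) i i = (exp (ζ • (G.adjMatrix ℝ))) j j}.Finite :=
  interlacing_points_finite_general G lam1 ψ1 heig hpos hsimple i j hne
end
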